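/- arXiv:1604.04700 — 4 statements merged into one kernel-verified Lean document; each statement's English description precedes it below -/
import Mathlib

section
/- Universal modular symbols are antisymmetric: for nonzero vectors g₀,…,g_{n−1} in an n-dimensional vector space V over a field K, swapping two entries changes the sign: [g₀,…,g_i,…,g_j,…,g_{n−1}] = −[g₀,…,g_j,…,g_i,…,g_{n−1}]. Moreover this antisymmetry follows formally from the relations: (3) [g₀,…,g_{n−1}] = 0 whenever g₀,…,g_{n−1} are linearly dependent, and (4) Σ_{i=0}^{n} (−1)^i [g₀,…,ĝ_i,…,g_n] = 0 for any n+1 nonzero vectors. -/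
/-!
Apply relation (4) to `g` with one entry repeated: every face that still contains both copies
vanishes by (3), and when the copy of `g (k + 1)` sits just before `g k`, the two remaining faces
are `g` and `g` with its entries `k` and `k + 1` swapped, and they carry the same sign. Hence `φ`
changes sign under adjacent transpositions, which generate the symmetric group, so
`φ (g ∘ σ) = sign σ • φ g` for every permutation `σ`.
-/

open Equiv

theorem Fin.succAbove_succ_succ_of_ne {m : ℕ} (k : Fin m) {j : Fin (m + 1)}
    (hj : j ≠ k.castSucc) :
    k.succ.succ.succAbove j = k.castSucc.castSucc.succAbove (swap k.castSucc k.succ j) := by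
  rw [Ne, Fin.ext_iff] at hj
  simp only [Fin.succAbove, swap_apply_def, Fin.lt_def, Fin.ext_iff, Fin.val_succ,
    Fin.val_castSucc] at *
  split_ifs <;> simp only [Fin.val_succ, Fin.val_castSucc] at * <;> omega

section

variable {K V M : Type*} [Semiring K] [AddCommMonoid V] [Module K V] [AddCommGroup M] {n : ℕ}

variable (K) in
/-- Relation (3). -/
def VanishesOnDependent (φ : (Fin n → V) → M) : Prop :=
  ∀ g : Fin n → V, (∀ i, g i ≠ 0) → ¬ LinearIndependent K g → φ g = 0

/-- Relation (4). -/
def AlternatingSumVanishes (φ : (Fin n → V) → M) : Prop :=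
  ∀ g : Fin (n + 1) → V, (∀ i, g i ≠ 0) →
    ∑ i : Fin (n + 1), ((-1 : ℤ) ^ (i : ℕ)) • φ (fun j => g (i.succAbove j)) = 0

variable {φ : (Fin n → V) → M}

theorem VanishesOnDependent.apply_eq_zero_of_eq [Nontrivial K] (h3 : VanishesOnDependent K φ)
    {g : Fin n → V} (hg : ∀ i, g i ≠ 0) {a b : Fin n} (hab : a ≠ b) (h : g a = g b) :
    φ g = 0 :=
  h3 g hg fun hli => hab (hli.injective h)

/-- Every other face of `g` still contains both entries `g p = g q`. -/
theorem AlternatingSumVanishes.faces_add_eq_zero_of_eq [Nontrivial K]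
    (h4 : AlternatingSumVanishes φ) (h3 : VanishesOnDependent K φ) {g : Fin (n + 1) → V}
    (hg : ∀ i, g i ≠ 0) {p q : Fin (n + 1)} (hpq : p ≠ q) (h : g p = g q) :
    ((-1 : ℤ) ^ (p : ℕ)) • φ (g ∘ p.succAbove) + ((-1 : ℤ) ^ (q : ℕ)) • φ (g ∘ q.succAbove) =
      0 := by
  rw [← h4 g hg, Fintype.sum_eq_add p q hpq]
  · rfl
  rintro x ⟨hxp, hxq⟩
  obtain ⟨a, rfl⟩ := Fin.exists_succAbove_eq hxp.symm
  obtain ⟨b, rfl⟩ := Fin.exists_succAbove_eq hxq.symm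
  have hab : a ≠ b := fun hab => hpq (congrArg _ hab)
  rw [h3.apply_eq_zero_of_eq (fun i => hg _) hab h, smul_zero]

theorem apply_comp_swap_castSucc_succ [Nontrivial K] {m : ℕ} {φ : (Fin (m + 1) → V) → M}
    (h3 : VanishesOnDependent K φ) (h4 : AlternatingSumVanishes φ)
    {g : Fin (m + 1) → V} (hg : ∀ i, g i ≠ 0) (k : Fin m) :
    φ (g ∘ swap k.castSucc k.succ) = -φ g := by
  set p : Fin (m + 2) := k.castSucc.castSucc
  set q : Fin (m + 2) := k.succ.succ
  -- `g'` is `g` with a copy of `g (k + 1)` inserted just before `g k`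
  set g' : Fin (m + 2) → V := p.insertNth (g k.succ) g
  have hg' : ∀ i, g' i ≠ 0 := Fin.forall_iff_succAbove p |>.2
    ⟨by simpa [g'] using hg _, fun i => by simpa [g'] using hg i⟩
  have hq : p.succAbove k.succ = q := by
    rw [Fin.succAbove_of_le_castSucc _ _ (Fin.castSucc_le_castSucc_iff.2 k.castSucc_le_succ)]
  have hpq : g' p = g' q := by simp [g', ← hq]
  have hp_face : g' ∘ p.succAbove = g := Fin.insertNth_comp_succAbove p _ g
  have hq_face : g' ∘ q.succAbove = g ∘ swap k.castSucc k.succ := by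
    funext j
    by_cases hj : j = k.castSucc
    · subst hj
      rw [Function.comp_apply, Fin.succAbove_of_castSucc_lt _ _ (by simp [q, Fin.lt_def])]
      simp [g', p]
    · rw [Function.comp_apply, Fin.succAbove_succ_succ_of_ne k hj, ← hp_face]
      rfl
  have hsum := h4.faces_add_eq_zero_of_eq h3 hg' (p := p) (q := q)
    (Fin.ne_of_val_ne (by simp [p, q]; omega)) hpq
  have hsign : (-1 : ℤ) ^ (q : ℕ) = (-1) ^ (p : ℕ) := by simp [p, q, pow_succ]
  rw [hp_face, hq_face, hsign, ← smul_add] at hsum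
  rw [eq_neg_iff_add_eq_zero, add_comm]
  rcases neg_one_pow_eq_or ℤ (p : ℕ) with hp | hp <;>
    simpa only [hp, one_smul, neg_smul, neg_eq_zero] using hsum

theorem apply_comp_perm [Nontrivial K] (h3 : VanishesOnDependent K φ)
    (h4 : AlternatingSumVanishes φ) (σ : Perm (Fin n)) {g : Fin n → V} (hg : ∀ i, g i ≠ 0) :
    φ (g ∘ σ) = (Perm.sign σ : ℤ) • φ g := by
  cases n with
  | zero => simp [Subsingleton.elim σ 1]
  | succ m =>
    have hσ : σ ∈ Submonoid.closure (Set.range fun k : Fin m ↦ swap k.castSucc k.succ) := by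
      rw [Perm.mclosure_swap_castSucc_succ]
      trivial
    induction hσ using Submonoid.closure_induction generalizing g with
    | mem _ hswap =>
      obtain ⟨k, rfl⟩ := hswap
      rw [apply_comp_swap_castSucc_succ h3 h4 hg, Perm.sign_swap Fin.castSucc_lt_succ.ne]
      simp
    | one => simp
    | mul σ τ _ _ hσ hτ =>
      rw [Perm.coe_mul, ← Function.comp_assoc, hτ (g := g ∘ σ) fun i => hg _, hσ hg, smul_smul,
        Perm.sign_mul, Units.val_mul, mul_comm]

end

theorem modularSymbol_antisymm_general {K V M : Type*} [Field K] [AddCommGroup V] [Module K V]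
    [AddCommGroup M] {n : ℕ}
    (φ : (Fin n → V) → M)
    (h3 : ∀ g : Fin n → V, (∀ i, g i ≠ 0) → ¬ LinearIndependent K g → φ g = 0)
    (h4 : ∀ g : Fin (n + 1) → V, (∀ i, g i ≠ 0) →
      ∑ i : Fin (n + 1), ((-1 : ℤ) ^ (i : ℕ)) • φ (fun j => g (i.succAbove j)) = 0) :
    ∀ g : Fin n → V, (∀ i, g i ≠ 0) → ∀ i j : Fin n, i ≠ j →
      φ (g ∘ Equiv.swap i j) = - φ g := by
  intro g hg i j hij
  rw [apply_comp_perm (K := K) h3 h4 _ hg, Perm.sign_swap hij]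
  simp

/-- Universal modular symbols are antisymmetric, and this follows formally from the
relations (3) (vanishing on linearly dependent tuples) and (4) (vanishing alternating sums):
any function `φ` on `n`-tuples of nonzero vectors of an `n`-dimensional `K`-vector space `V`,
with values in an abelian group, which satisfies (3) and (4), satisfies
`[… gᵢ … gⱼ …] = −[… gⱼ … gᵢ …]`. -/
theorem modularSymbol_antisymm {K V M : Type*} [Field K] [AddCommGroup V] [Module K V]
    [AddCommGroup M] {n : ℕ} (hdim : Module.finrank K V = n)
    (φ : (Fin n → V) → M)
    (h3 : ∀ g : Fin n → V, (∀ i, g i ≠ 0) → ¬ LinearIndependent K g → φ g = 0)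
    (h4 : ∀ g : Fin (n + 1) → V, (∀ i, g i ≠ 0) →
      ∑ i : Fin (n + 1), ((-1 : ℤ) ^ (i : ℕ)) • φ (fun j => g (i.succAbove j)) = 0) :
    ∀ g : Fin n → V, (∀ i, g i ≠ 0) → ∀ i j : Fin n, i ≠ j →
      φ (g ∘ Equiv.swap i j) = - φ g :=
  modularSymbol_antisymm_general φ h3 h4
end

section
/- Universal modular symbols are projectively invariant: in the abelian group generated by symbols [g₀,…,g_{n−1}] subject to the dependence relation and the alternating-sum relation, one has [a·g₀, g₁,…,g_{n−1}] = [g₀, g₁,…,g_{n−1}] for every nonzero scalar a ∈ K − {0}. -/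
/-!
Apply the alternating-sum relation to the `n + 1` vectors `a • g₀, g₀, g₁, …, g_{n-1}`. Omitting the
first or the second vector gives the two symbols to be compared; every other face still contains
both `a • g₀` and `g₀`, so it is linearly dependent and vanishes.
-/

section

variable {K V : Type*} [Semiring K] [AddCommMonoid V] [Module K V]

theorem not_linearIndependent_of_not_linearIndependent_pair {ι : Type*} {v : ι → V} {i j : ι}
    (hij : i ≠ j) (h : ¬ LinearIndependent K ![v i, v j]) : ¬ LinearIndependent K v := fun hv =>
  h <| by
    convert hv.comp ![i, j] ?_ using 1
    · ext k
      fin_cases k <;> rfl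
    · intro a b
      fin_cases a <;> fin_cases b <;> simp [hij, hij.symm]

variable {m : ℕ}

theorem not_linearIndependent_cons_cons_comp_succAbove {x y : V} (t : Fin m → V)
    (hxy : ¬ LinearIndependent K ![x, y]) (i : Fin m) :
    ¬ LinearIndependent K
      (fun j => (Fin.cons x (Fin.cons y t) : Fin (m + 2) → V) (i.succ.succ.succAbove j)) := by
  obtain ⟨k, rfl⟩ : ∃ k, m = k + 1 := ⟨m - 1, by have := i.pos; omega⟩
  refine not_linearIndependent_of_not_linearIndependent_pair (i := 0) (j := 1) (by simp) ?_
  simpa using hxy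

theorem cons_eq_cons_of_not_linearIndependent_pair {M : Type*} [AddCommGroup M]
    {φ : (Fin (m + 1) → V) → M}
    (h3 : ∀ g : Fin (m + 1) → V, (∀ i, g i ≠ 0) → ¬ LinearIndependent K g → φ g = 0)
    (h4 : ∀ g : Fin (m + 2) → V, (∀ i, g i ≠ 0) →
      ∑ i : Fin (m + 2), ((-1 : ℤ) ^ (i : ℕ)) • φ (fun j => g (i.succAbove j)) = 0)
    {x y : V} {t : Fin m → V} (hx : x ≠ 0) (hy : y ≠ 0) (ht : ∀ i, t i ≠ 0)
    (hxy : ¬ LinearIndependent K ![x, y]) :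
    φ (Fin.cons x t) = φ (Fin.cons y t) := by
  have hne : ∀ i, (Fin.cons x (Fin.cons y t) : Fin (m + 2) → V) i ≠ 0 :=
    Fin.cases hx (Fin.cases hy ht)
  have face_zero : (fun j => (Fin.cons x (Fin.cons y t) : Fin (m + 2) → V)
      ((0 : Fin (m + 2)).succAbove j)) = Fin.cons y t := by
    simp
  have face_one : (fun j => (Fin.cons x (Fin.cons y t) : Fin (m + 2) → V)
      ((1 : Fin (m + 2)).succAbove j)) = Fin.cons x t := by
    ext j
    refine Fin.cases ?_ ?_ j <;> simp
  have faces_vanish : ∀ i : Fin m, φ (fun j => (Fin.cons x (Fin.cons y t) : Fin (m + 2) → V)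
      (i.succ.succ.succAbove j)) = 0 := fun i =>
    h3 _ (fun _ => hne _) (not_linearIndependent_cons_cons_comp_succAbove t hxy i)
  have key := h4 _ hne
  simp only [Fin.sum_univ_succ (n := m + 1), Fin.sum_univ_succ (n := m), faces_vanish, smul_zero,
    Finset.sum_const_zero, add_zero, Fin.succ_zero_eq_one, face_zero, face_one, Fin.val_zero, Fin.val_one,
    pow_zero, pow_one, one_smul, neg_one_smul, ← sub_eq_add_neg, sub_eq_zero] at key
  exact key.symm

end

theorem modularSymbol_scale_invariant_general {K V M : Type*} [Field K] [AddCommGroup V] [Module K V]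
    [AddCommGroup M] {n : ℕ} (hn : 0 < n)
    (φ : (Fin n → V) → M)
    (h3 : ∀ g : Fin n → V, (∀ i, g i ≠ 0) → ¬ LinearIndependent K g → φ g = 0)
    (h4 : ∀ g : Fin (n + 1) → V, (∀ i, g i ≠ 0) →
      ∑ i : Fin (n + 1), ((-1 : ℤ) ^ (i : ℕ)) • φ (fun j => g (i.succAbove j)) = 0) :
    ∀ g : Fin n → V, (∀ i, g i ≠ 0) → ∀ a : K, a ≠ 0 →
      φ (Function.update g ⟨0, hn⟩ (a • g ⟨0, hn⟩)) = φ g := by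
  intro g hg a ha
  obtain ⟨m, rfl⟩ : ∃ m, n = m + 1 := ⟨n - 1, by omega⟩
  have hdep : ¬ LinearIndependent K ![a • g 0, g 0] := by
    rw [LinearIndependent.pair_symm_iff, LinearIndependent.pair_iff' (hg 0)]
    exact fun h => h a rfl
  have h := cons_eq_cons_of_not_linearIndependent_pair h3 h4 (smul_ne_zero ha (hg 0)) (hg 0)
    (t := Fin.tail g) (fun i => hg i.succ) hdep
  rwa [Fin.cons_self_tail, ← Fin.update_cons_zero (g 0), Fin.cons_self_tail] at h

/-- Universal modular symbols are projectively invariant, formally as a consequence of the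
relations (3) (vanishing on linearly dependent tuples) and (4) (vanishing alternating sums):
any function `φ` on `n`-tuples of nonzero vectors of an `n`-dimensional `K`-vector space `V`,
with values in an abelian group, which satisfies (3) and (4), satisfies
`[a·g₀, g₁, …, g_{n−1}] = [g₀, g₁, …, g_{n−1}]` for any nonzero scalar `a`. -/
theorem modularSymbol_scale_invariant {K V M : Type*} [Field K] [AddCommGroup V] [Module K V]
    [AddCommGroup M] {n : ℕ} (hn : 0 < n) (hdim : Module.finrank K V = n)
    (φ : (Fin n → V) → M)
    (h3 : ∀ g : Fin n → V, (∀ i, g i ≠ 0) → ¬ LinearIndependent K g → φ g = 0)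
    (h4 : ∀ g : Fin (n + 1) → V, (∀ i, g i ≠ 0) →
      ∑ i : Fin (n + 1), ((-1 : ℤ) ^ (i : ℕ)) • φ (fun j => g (i.succAbove j)) = 0) :
    ∀ g : Fin n → V, (∀ i, g i ≠ 0) → ∀ a : K, a ≠ 0 →
      φ (Function.update g ⟨0, hn⟩ (a • g ⟨0, hn⟩)) = φ g :=
  modularSymbol_scale_invariant_general hn φ h3 h4
end

section
/- For n = dim(V) ≥ 2, the group presented by generators ∂(g₀,…,g_n) (gᵢ ∈ V) with relations (a) ∂(g₀,…,g_n)=0 if the collection does not contain 0 or contains 0 but fails to span V, and (b) alternating sums vanish, is isomorphic to the group presented by generators ∂(0,g₁,…,g_n) (gᵢ ∈ V−{0}) with relations: (1) ∂(0,g₁,…,g_n)=0 if g₁,…,g_n are linearly dependent, and (2) Σ_{i=1}^{n+1}(−1)^i ∂(0,g₁,…,ĝᵢ,…,g_{n+1}) = 0. -/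
open Finset

variable {K V : Type} [Field K] [AddCommGroup V] [Module K V] {n : ℕ}

/-- Relations of the first presentation: (a) a generator `∂(g₀,…,g_n)` is a relation if the
tuple does not contain `0`, or contains `0` but fails to span `V`; (b) alternating sums of
deletions of `(n+2)`-tuples are relations. -/
def relA (K : Type) [Field K] (V : Type) [AddCommGroup V] [Module K V] (n : ℕ) :
    Set (FreeAbelianGroup (Fin (n + 1) → V)) :=
  {x | (∃ g : Fin (n + 1) → V,
          ((¬ ∃ i, g i = 0) ∨ ((∃ i, g i = 0) ∧ Submodule.span K (Set.range g) ≠ ⊤)) ∧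
          x = FreeAbelianGroup.of g) ∨
       (∃ g : Fin (n + 2) → V,
          x = ∑ i : Fin (n + 2), ((-1 : ℤ) ^ (i : ℕ)) •
                FreeAbelianGroup.of (fun j => g (i.succAbove j)))}

/-- The group of the first presentation, with generators `∂(g₀,…,g_n)`, `gᵢ ∈ V`. -/
def GroupA (K : Type) [Field K] (V : Type) [AddCommGroup V] [Module K V] (n : ℕ) :=
  FreeAbelianGroup (Fin (n + 1) → V) ⧸ AddSubgroup.closure (relA K V n)

/-- Relations of the second presentation: (1) a generator `∂(0,g₁,…,g_n)` with `g₁,…,g_n`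
linearly dependent is a relation; (2) alternating sums of deletions of `(n+1)`-tuples of
nonzero vectors are relations. -/
def relB (K : Type) [Field K] (V : Type) [AddCommGroup V] [Module K V] (n : ℕ) :
    Set (FreeAbelianGroup {g : Fin n → V // ∀ i, g i ≠ 0}) :=
  {x | (∃ g : {g : Fin n → V // ∀ i, g i ≠ 0},
          ¬ LinearIndependent K (g : Fin n → V) ∧ x = FreeAbelianGroup.of g) ∨
       (∃ (g : Fin (n + 1) → V) (hg : ∀ i, g i ≠ 0),
          x = ∑ i : Fin (n + 1), ((-1 : ℤ) ^ (i : ℕ)) •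
                FreeAbelianGroup.of
                  (⟨fun j => g (i.succAbove j), fun j => hg (i.succAbove j)⟩ :
                    {g : Fin n → V // ∀ i, g i ≠ 0}))}

/-- The group of the second presentation, with generators `∂(0,g₁,…,g_n)`, `gᵢ ∈ V − {0}`. -/
def GroupB (K : Type) [Field K] (V : Type) [AddCommGroup V] [Module K V] (n : ℕ) :=
  FreeAbelianGroup {g : Fin n → V // ∀ i, g i ≠ 0} ⧸ AddSubgroup.closure (relB K V n)

noncomputable instance : AddCommGroup (GroupA K V n) := by
  unfold GroupA; infer_instance

noncomputable instance : AddCommGroup (GroupB K V n) := by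
  unfold GroupB; infer_instance

/-!
Relation (b) for `(0, g₀, …, g_n)` reads `∂(g₀, …, g_n) = ∑ᵢ (-1)ⁱ ∂(0, g₀, …, ĝᵢ, …, g_n)`, so the
first group is generated by the symbols `∂(0, e)`, and (a) kills those where `e` contains `0`, since
then at most `n - 1` entries are nonzero. Conversely, send `∂(g₀, …, g_n)` to the same alternating
sum in the second group, with `∂(0, e) := 0` when `e` contains `0`. This respects (b) because
`∂ ∘ ∂ = 0` on tuples, and it respects (a): without zero entries the sum is relation (2), and if
`gₚ = 0` every term but the `p`-th contains `0`, so the sum collapses to `± ∂(0, g₀, …, ĝₚ, …, g_n)`,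
whose entries span the same space as `g`.
-/

namespace Fin

theorem removeNth_succ_cons {α : Type*} (x : α) (f : Fin (n + 1) → α) (i : Fin (n + 1)) :
    removeNth i.succ (cons x f : Fin (n + 2) → α) = (cons x (removeNth i f) : Fin (n + 1) → α) := by
  ext j
  refine Fin.cases ?_ (fun j => ?_) j <;> simp [removeNth]

theorem sum_neg_one_pow_smul_removeNth_removeNth {α M : Type*} [AddCommGroup M]
    (F : (Fin n → α) → M) (g : Fin (n + 2) → α) :
    ∑ j : Fin (n + 2), (-1 : ℤ) ^ (j : ℕ) •
      ∑ i : Fin (n + 1), (-1 : ℤ) ^ (i : ℕ) • F (i.removeNth (j.removeNth g)) = 0 := by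
  simp only [smul_sum, smul_smul, ← pow_add]
  rw [sum_sum_eq_sum_triangle_add]
  refine sum_eq_zero fun j _ => sum_eq_zero fun i hi => ?_
  -- for `j ≤ i`, the terms `(j, i)` and `(i + 1, j)` delete the same two entries
  have hswap : i.removeNth (j.castSucc.removeNth g) = j.removeNth (i.succ.removeNth g) := by
    rw [removeNth_removeNth_eq_swap]
    simp [predAbove, succAbove, (mem_Ici.1 hi).not_gt]
  rw [hswap, val_castSucc, val_succ, ← add_smul,
    show (-1 : ℤ) ^ ((j : ℕ) + i) + (-1) ^ ((i : ℕ) + 1 + j) = 0 by ring, zero_smul]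

end Fin

theorem linearIndependent_iff_span_eq_top_of_card_eq_finrank [FiniteDimensional K V]
    {ι : Type*} [Fintype ι] {b : ι → V} (hcard : Fintype.card ι = Module.finrank K V) :
    LinearIndependent K b ↔ Submodule.span K (Set.range b) = ⊤ :=
  ⟨fun hb => hb.span_eq_top_of_card_eq_finrank' hcard,
    fun hspan => linearIndependent_of_top_le_span_of_card_eq_finrank hspan.ge hcard⟩

theorem span_range_removeNth_of_eq_zero {g : Fin (n + 1) → V} {p : Fin (n + 1)} (hp : g p = 0) :
    Submodule.span K (Set.range (p.removeNth g)) = Submodule.span K (Set.range g) := by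
  conv_rhs => rw [← p.insertNth_self_removeNth g, hp, Fin.range_insertNth]
  exact (Submodule.span_insert_zero).symm

namespace GroupA

variable (K) in
noncomputable def mk : FreeAbelianGroup (Fin (n + 1) → V) →+ GroupA K V n :=
  QuotientAddGroup.mk' _

variable (K) in
noncomputable def gen (g : Fin (n + 1) → V) : GroupA K V n :=
  mk K (FreeAbelianGroup.of g)

theorem mk_eq_zero_of_mem {x : FreeAbelianGroup (Fin (n + 1) → V)} (hx : x ∈ relA K V n) :
    mk K x = 0 :=
  (QuotientAddGroup.eq_zero_iff x).2 (AddSubgroup.subset_closure hx)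

variable {M : Type*} [AddCommGroup M]

theorem addMonoidHom_ext {f f' : GroupA K V n →+ M} (h : ∀ g, f (gen K g) = f' (gen K g)) :
    f = f' :=
  QuotientAddGroup.addMonoidHom_ext _ (FreeAbelianGroup.lift_ext _ _ h)

noncomputable def lift (φ : (Fin (n + 1) → V) → M)
    (h_a : ∀ g : Fin (n + 1) → V,
      ((¬ ∃ i, g i = 0) ∨ ((∃ i, g i = 0) ∧ Submodule.span K (Set.range g) ≠ ⊤)) → φ g = 0)
    (h_b : ∀ g : Fin (n + 2) → V, ∑ i : Fin (n + 2), (-1 : ℤ) ^ (i : ℕ) • φ (i.removeNth g) = 0) :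
    GroupA K V n →+ M :=
  QuotientAddGroup.lift _ (FreeAbelianGroup.lift φ) <| (AddSubgroup.closure_le _).2 <| by
    rintro _ (⟨g, hg, rfl⟩ | ⟨g, rfl⟩) <;> rw [SetLike.mem_coe, AddMonoidHom.mem_ker]
    · simpa using h_a g hg
    · simp only [map_sum, map_zsmul, FreeAbelianGroup.lift_apply_of]
      exact h_b g

theorem lift_gen (φ : (Fin (n + 1) → V) → M) h_a h_b (g : Fin (n + 1) → V) :
    lift (K := K) φ h_a h_b (gen K g) = φ g :=
  FreeAbelianGroup.lift_apply_of φ g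

theorem gen_eq_zero_of_forall_ne_zero {g : Fin (n + 1) → V} (hg : ∀ i, g i ≠ 0) :
    gen K g = 0 :=
  mk_eq_zero_of_mem <| Or.inl ⟨g, Or.inl fun ⟨i, hi⟩ => hg i hi, rfl⟩

theorem gen_eq_zero_of_span_ne_top {g : Fin (n + 1) → V} {p : Fin (n + 1)} (hp : g p = 0)
    (hg : Submodule.span K (Set.range g) ≠ ⊤) : gen K g = 0 :=
  mk_eq_zero_of_mem <| Or.inl ⟨g, Or.inr ⟨⟨p, hp⟩, hg⟩, rfl⟩

theorem sum_neg_one_pow_smul_gen_removeNth (g : Fin (n + 2) → V) :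
    ∑ i : Fin (n + 2), (-1 : ℤ) ^ (i : ℕ) • gen K (i.removeNth g) = 0 := by
  have h := mk_eq_zero_of_mem (K := K) (Or.inr ⟨g, rfl⟩)
  rw [map_sum] at h
  simp only [map_zsmul] at h
  exact h

theorem sum_neg_one_pow_smul_gen_cons_zero_removeNth (g : Fin (n + 1) → V) :
    ∑ i : Fin (n + 1), (-1 : ℤ) ^ (i : ℕ) • gen K (Fin.cons 0 (i.removeNth g)) = gen K g := by
  have h := sum_neg_one_pow_smul_gen_removeNth (K := K) (Fin.cons 0 g)
  rw [Fin.sum_univ_succ] at h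
  simp only [Fin.removeNth_succ_cons, Fin.removeNth_zero, Fin.tail_cons, Fin.val_zero,
    Fin.val_succ, pow_zero, one_smul, pow_succ, mul_neg_one, neg_smul, sum_neg_distrib] at h
  exact (add_neg_eq_zero.1 h).symm

variable [FiniteDimensional K V]

theorem gen_eq_zero_of_eq_zero_of_eq_zero (hdim : Module.finrank K V = n)
    {g : Fin (n + 1) → V} {p q : Fin (n + 1)} (hp : g p = 0) (hq : g q = 0) (hpq : p ≠ q) :
    gen K g = 0 := by
  obtain ⟨q, rfl⟩ := Fin.exists_succAbove_eq hpq.symm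
  refine gen_eq_zero_of_span_ne_top hp ?_
  rw [Ne, ← span_range_removeNth_of_eq_zero hp,
    ← linearIndependent_iff_span_eq_top_of_card_eq_finrank (by simp [hdim])]
  exact fun hli => hli.ne_zero q hq

end GroupA

namespace GroupB

variable (K) in
noncomputable def mk : FreeAbelianGroup {e : Fin n → V // ∀ i, e i ≠ 0} →+ GroupB K V n :=
  QuotientAddGroup.mk' _

open Classical in
variable (K) in
/-- `∂(0, e)`, extended by zero to tuples `e` containing `0`. -/
noncomputable def gen (e : Fin n → V) : GroupB K V n :=
  if he : ∀ i, e i ≠ 0 then mk K (FreeAbelianGroup.of ⟨e, he⟩) else 0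

theorem mk_eq_zero_of_mem {x : FreeAbelianGroup {e : Fin n → V // ∀ i, e i ≠ 0}}
    (hx : x ∈ relB K V n) : mk K x = 0 :=
  (QuotientAddGroup.eq_zero_iff x).2 (AddSubgroup.subset_closure hx)

theorem gen_of_forall_ne_zero {e : Fin n → V} (he : ∀ i, e i ≠ 0) :
    gen K e = mk K (FreeAbelianGroup.of ⟨e, he⟩) :=
  dif_pos he

variable {M : Type*} [AddCommGroup M]

theorem addMonoidHom_ext {f f' : GroupB K V n →+ M} (h : ∀ e, f (gen K e) = f' (gen K e)) :
    f = f' :=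
  QuotientAddGroup.addMonoidHom_ext _ <| FreeAbelianGroup.lift_ext _ _ fun ⟨e, he⟩ => by
    have h' := h e
    rw [gen_of_forall_ne_zero he] at h'
    exact h'

noncomputable def lift (ψ : {e : Fin n → V // ∀ i, e i ≠ 0} → M)
    (h_1 : ∀ e : {e : Fin n → V // ∀ i, e i ≠ 0}, ¬ LinearIndependent K (e : Fin n → V) → ψ e = 0)
    (h_2 : ∀ (g : Fin (n + 1) → V) (hg : ∀ i, g i ≠ 0),
      ∑ i : Fin (n + 1), (-1 : ℤ) ^ (i : ℕ) • ψ ⟨i.removeNth g, fun _ => hg _⟩ = 0) :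
    GroupB K V n →+ M :=
  QuotientAddGroup.lift _ (FreeAbelianGroup.lift ψ) <| (AddSubgroup.closure_le _).2 <| by
    rintro _ (⟨e, he, rfl⟩ | ⟨g, hg, rfl⟩) <;> rw [SetLike.mem_coe, AddMonoidHom.mem_ker]
    · simpa using h_1 e he
    · simp only [map_sum, map_zsmul, FreeAbelianGroup.lift_apply_of]
      exact h_2 g hg

theorem lift_gen (ψ : {e : Fin n → V // ∀ i, e i ≠ 0} → M) h_1 h_2 {e : Fin n → V}
    (he : ∀ i, e i ≠ 0) : lift (K := K) ψ h_1 h_2 (gen K e) = ψ ⟨e, he⟩ := by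
  rw [gen_of_forall_ne_zero he]
  exact FreeAbelianGroup.lift_apply_of ψ _

theorem gen_eq_zero_of_eq_zero {e : Fin n → V} {p : Fin n} (hp : e p = 0) : gen K e = 0 :=
  dif_neg fun he => he p hp

theorem gen_eq_zero_of_not_linearIndependent {e : Fin n → V} (he : ¬ LinearIndependent K e) :
    gen K e = 0 := by
  by_cases hne : ∀ i, e i ≠ 0
  · rw [gen_of_forall_ne_zero hne]
    exact mk_eq_zero_of_mem (Or.inl ⟨⟨e, hne⟩, he, rfl⟩)
  · exact dif_neg hne

variable (K) in
/-- Relation (b) for `(0, g₀, …, g_n)` expresses `∂(g₀, …, g_n)` as this alternating sum. -/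
noncomputable def cone (g : Fin (n + 1) → V) : GroupB K V n :=
  ∑ i : Fin (n + 1), (-1 : ℤ) ^ (i : ℕ) • gen K (i.removeNth g)

theorem cone_eq_zero_of_forall_ne_zero {g : Fin (n + 1) → V} (hg : ∀ i, g i ≠ 0) :
    cone K g = 0 := by
  have h := mk_eq_zero_of_mem (K := K) (Or.inr ⟨g, hg, rfl⟩)
  rw [map_sum] at h
  refine Eq.trans (sum_congr rfl fun i _ => ?_) h
  rw [gen_of_forall_ne_zero (e := i.removeNth g) fun j => hg _, map_zsmul]
  rfl

theorem cone_eq_of_eq_zero {g : Fin (n + 1) → V} {p : Fin (n + 1)} (hp : g p = 0) :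
    cone K g = (-1 : ℤ) ^ (p : ℕ) • gen K (p.removeNth g) :=
  Fintype.sum_eq_single p fun i hi => by
    obtain ⟨p', rfl⟩ := Fin.exists_succAbove_eq hi.symm
    rw [gen_eq_zero_of_eq_zero (p := p') hp, smul_zero]

theorem sum_neg_one_pow_smul_cone_removeNth (g : Fin (n + 2) → V) :
    ∑ j : Fin (n + 2), (-1 : ℤ) ^ (j : ℕ) • cone K (j.removeNth g) = 0 :=
  Fin.sum_neg_one_pow_smul_removeNth_removeNth (gen K) g

theorem cone_eq_zero_of_span_ne_top [FiniteDimensional K V] (hdim : Module.finrank K V = n)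
    {g : Fin (n + 1) → V} {p : Fin (n + 1)} (hp : g p = 0)
    (hg : Submodule.span K (Set.range g) ≠ ⊤) : cone K g = 0 := by
  rw [cone_eq_of_eq_zero hp, gen_eq_zero_of_not_linearIndependent, smul_zero]
  rwa [linearIndependent_iff_span_eq_top_of_card_eq_finrank (by simp [hdim]),
    span_range_removeNth_of_eq_zero hp]

end GroupB

section Isomorphism

variable [FiniteDimensional K V] (hdim : Module.finrank K V = n)

noncomputable def GroupA.toGroupB : GroupA K V n →+ GroupB K V n :=
  GroupA.lift (GroupB.cone K)
    (by
      rintro g (hg | ⟨⟨p, hp⟩, hspan⟩)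
      · exact GroupB.cone_eq_zero_of_forall_ne_zero (not_exists.1 hg)
      · exact GroupB.cone_eq_zero_of_span_ne_top hdim hp hspan)
    GroupB.sum_neg_one_pow_smul_cone_removeNth

noncomputable def GroupB.toGroupA : GroupB K V n →+ GroupA K V n :=
  GroupB.lift (fun e => GroupA.gen K (Fin.cons 0 e.1))
    (fun e he => GroupA.gen_eq_zero_of_span_ne_top (p := 0) rfl <| by
      rwa [Ne, ← span_range_removeNth_of_eq_zero (p := 0) rfl, Fin.removeNth_zero, Fin.tail_cons,
        ← linearIndependent_iff_span_eq_top_of_card_eq_finrank (by simp [hdim])])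
    (fun g hg => by
      rw [GroupA.sum_neg_one_pow_smul_gen_cons_zero_removeNth]
      exact GroupA.gen_eq_zero_of_forall_ne_zero hg)

theorem GroupB.toGroupA_gen (e : Fin n → V) :
    toGroupA hdim (gen K e) = GroupA.gen K (Fin.cons 0 e) := by
  by_cases he : ∀ i, e i ≠ 0
  · exact lift_gen _ _ _ he
  · obtain ⟨p, hp⟩ := not_forall_not.1 he
    rw [gen_eq_zero_of_eq_zero hp, map_zero,
      GroupA.gen_eq_zero_of_eq_zero_of_eq_zero hdim (p := 0) (q := p.succ) rfl hp
        (Fin.succ_ne_zero p).symm]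

theorem GroupA.toGroupA_toGroupB_gen (g : Fin (n + 1) → V) :
    GroupB.toGroupA hdim (toGroupB hdim (gen K g)) = gen K g := by
  rw [toGroupB, lift_gen, GroupB.cone, map_sum]
  simp only [map_zsmul, GroupB.toGroupA_gen]
  exact sum_neg_one_pow_smul_gen_cons_zero_removeNth g

theorem GroupB.toGroupB_toGroupA_gen (e : Fin n → V) :
    GroupA.toGroupB hdim (toGroupA hdim (gen K e)) = gen K e := by
  rw [toGroupA_gen, GroupA.toGroupB, GroupA.lift_gen, cone_eq_of_eq_zero (p := 0) rfl,
    Fin.removeNth_zero, Fin.tail_cons, Fin.val_zero, pow_zero, one_smul]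

end Isomorphism

theorem presentationA_iso_presentationB_general [FiniteDimensional K V]
    (hdim : Module.finrank K V = n) :
    Nonempty (GroupA K V n ≃+ GroupB K V n) :=
  ⟨AddMonoidHom.toAddEquiv (GroupA.toGroupB hdim) (GroupB.toGroupA hdim)
    (GroupA.addMonoidHom_ext (GroupA.toGroupA_toGroupB_gen hdim))
    (GroupB.addMonoidHom_ext (GroupB.toGroupB_toGroupA_gen hdim))⟩

/-- For `n = dim V ≥ 2` the two presentations yield isomorphic groups. -/
theorem presentationA_iso_presentationB [FiniteDimensional K V]
    (hn : 2 ≤ n) (hdim : Module.finrank K V = n) :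
    Nonempty (GroupA K V n ≃+ GroupB K V n) :=
  presentationA_iso_presentationB_general hdim
end

section
/- Let A be an integral Noetherian domain with fraction field K, and let d be a finitely generated torsion-free A-module of rank n with V = d ⊗_A K. The functor from the comma category Q^tf_{n−1}(A) ↓ d to the poset J(V) of proper layers of V, sending an object (c ↞ c' ↣ d) with kernel ker(φ) to the layer (ker(φ) ⊗ K, c' ⊗ K), is an isomorphism of categories. -/
open TensorProduct OrderDual

variable (A : Type*) [CommRing A] [IsDomain A]
variable (d : Type*) [AddCommGroup d] [Module A d]

/-- The comma category `Q^tf_{n−1}(A) ↓ d`: by Quillen's description of morphisms in the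
Q-construction, its objects are spans `c ↞ c' ↣ d` with `c'` and `ker(c' ↠ c)` pure
submodules of `d`, not both `(0, d)`, and it is the poset of such pure layers
`(N₀, N₁) = (ker φ, c')` ordered by `(N₀,N₁) ≤ (N₀',N₁') ↔ N₀' ≤ N₀ ≤ N₁ ≤ N₁'`. -/
abbrev CommaQ : Type _ :=
  {p : (Submodule A d)ᵒᵈ × Submodule A d //
    ofDual p.1 ≤ p.2 ∧ NoZeroSMulDivisors A (d ⧸ ofDual p.1) ∧
      NoZeroSMulDivisors A (d ⧸ p.2) ∧ ¬(ofDual p.1 = ⊥ ∧ p.2 = ⊤)}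

/-- The poset `J(V)` of proper layers `(W₀, W₁)` of `V`, with
`(W₀,W₁) ≤ (W₀',W₁') ↔ W₀' ≤ W₀ ≤ W₁ ≤ W₁'`. -/
abbrev JV (K : Type*) [Field K] (V : Type*) [AddCommGroup V] [Module K V] : Type _ :=
  {q : (Submodule K V)ᵒᵈ × Submodule K V // ofDual q.1 ≤ q.2 ∧ ¬(ofDual q.1 = ⊥ ∧ q.2 = ⊤)}

/-!
Base change `N ↦ K ⊗ N` and restriction `W ↦ W ∩ d` form a Galois insertion between submodules
of `d` and subspaces of `V = K ⊗ d`. A submodule is closed, `(K ⊗ N) ∩ d = N`, exactly when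
`s • x ∈ N` with `s ≠ 0` forces `x ∈ N`, i.e. when it is pure; and every `W ∩ d` is pure since
nonzero scalars act invertibly on `V`. Hence `N ↦ K ⊗ N` is an order isomorphism from pure
submodules onto subspaces, and applying it to both ends of a layer gives the isomorphism. As `d`
is torsion-free, `0` is pure, so the excluded layer `(0, d)` matches the excluded `(0, V)`.
-/

open nonZeroDivisors

def GaloisInsertion.orderIsoOfClosed {α β : Type*} [PartialOrder α] [PartialOrder β]
    {l : α → β} {u : β → α} (gi : GaloisInsertion l u) (P : α → Prop)
    (hclosed : ∀ a, P a → u (l a) = a) (hu : ∀ b, P (u b)) : {a // P a} ≃o β where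
  toFun a := l a
  invFun b := ⟨u b, hu b⟩
  left_inv a := Subtype.ext (hclosed a a.2)
  right_inv := gi.l_u_eq
  map_rel_iff' {a b} := by
    refine ⟨fun h => ?_, fun h => gi.gc.monotone_l h⟩
    rw [← Subtype.coe_le_coe, ← hclosed a a.2, ← hclosed b b.2]
    exact gi.gc.monotone_u h

section ProperLayers

variable {α β : Type*} [PartialOrder α] [BoundedOrder α] [PartialOrder β] [BoundedOrder β]
  {P : α → Prop}

lemma OrderIso.subtype_apply_eq_bot_iff (e : {a // P a} ≃o β) (hbot : P ⊥) {a : α} (ha : P a) :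
    e ⟨a, ha⟩ = ⊥ ↔ a = ⊥ := by
  rw [← e.map_bot' (x := ⟨⊥, hbot⟩) (fun x => bot_le (a := x.1)) fun _ => bot_le,
    e.injective.eq_iff, Subtype.mk.injEq]

lemma OrderIso.subtype_apply_eq_top_iff (e : {a // P a} ≃o β) (htop : P ⊤) {a : α} (ha : P a) :
    e ⟨a, ha⟩ = ⊤ ↔ a = ⊤ := by
  rw [← e.map_top' (x := ⟨⊤, htop⟩) (fun x => le_top (a := x.1)) fun _ => le_top,
    e.injective.eq_iff, Subtype.mk.injEq]

def OrderIso.properLayers (e : {a // P a} ≃o β) (hbot : P ⊥) (htop : P ⊤) :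
    {p : αᵒᵈ × α // ofDual p.1 ≤ p.2 ∧ P (ofDual p.1) ∧ P p.2 ∧ ¬(ofDual p.1 = ⊥ ∧ p.2 = ⊤)} ≃o
      {q : βᵒᵈ × β // ofDual q.1 ≤ q.2 ∧ ¬(ofDual q.1 = ⊥ ∧ q.2 = ⊤)} where
  toFun p := ⟨(toDual (e ⟨ofDual p.1.1, p.2.2.1⟩), e ⟨p.1.2, p.2.2.2.1⟩), e.monotone p.2.1, by
    rw [ofDual_toDual, e.subtype_apply_eq_bot_iff hbot, e.subtype_apply_eq_top_iff htop]
    exact p.2.2.2.2⟩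
  invFun q := ⟨(toDual (e.symm (ofDual q.1.1)).1, (e.symm q.1.2).1), e.symm.monotone q.2.1,
    (e.symm _).2, (e.symm _).2, by
    rw [ofDual_toDual, ← e.subtype_apply_eq_bot_iff hbot (e.symm _).2,
      ← e.subtype_apply_eq_top_iff htop (e.symm _).2, Subtype.coe_eta, Subtype.coe_eta,
      e.apply_symm_apply, e.apply_symm_apply]
    exact q.2.2⟩
  left_inv p := by simp
  right_inv q := by simp
  map_rel_iff' {p q} := by
    simp [← Subtype.coe_le_coe, Prod.le_def]

end ProperLayers

namespace Submodule

section Localization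

variable {R M N : Type*} (S : Type*) [CommSemiring R] [CommSemiring S] [AddCommMonoid M]
  [AddCommMonoid N] [Module R M] [Module R N] [Algebra R S] [Module S N] [IsScalarTower R S N]
  (p : Submonoid R) [IsLocalization p S] (f : M →ₗ[R] N)

lemma mem_comap_localized'_iff [IsLocalizedModule p f] (P : Submodule R M) {x : M} :
    x ∈ comap f ((P.localized' S p f).restrictScalars R) ↔ ∃ t : p, t • x ∈ P := by
  refine ⟨fun ⟨m, hm, s, hx⟩ => ?_, fun ⟨t, ht⟩ => ⟨t • x, ht, t, ?_⟩⟩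
  · rw [IsLocalizedModule.mk'_eq_iff, Submonoid.smul_def, ← map_smul] at hx
    obtain ⟨c, hc⟩ := IsLocalizedModule.exists_of_eq (S := p) hx
    exact ⟨c * s, by rw [mul_smul, Submonoid.smul_def s x, ← hc]; exact P.smul_of_tower_mem c hm⟩
  · rw [IsLocalizedModule.mk'_eq_iff, Submonoid.smul_def, map_smul, Submonoid.smul_def]

lemma comap_localized'_of_smul_mem [IsLocalizedModule p f] {P : Submodule R M}
    (hP : ∀ t : p, ∀ x, t • x ∈ P → x ∈ P) :
    comap f ((P.localized' S p f).restrictScalars R) = P :=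
  le_antisymm (fun _ hx => have ⟨t, ht⟩ := (mem_comap_localized'_iff S p f P).mp hx; hP t _ ht)
    ((localized'gi S p f).gc.le_u_l P)

lemma smul_mem_comap_restrictScalars_iff (W : Submodule S N) (t : p) {x : M} :
    t • x ∈ comap f (W.restrictScalars R) ↔ x ∈ comap f (W.restrictScalars R) := by
  rw [mem_comap, mem_comap, restrictScalars_mem, restrictScalars_mem, Submonoid.smul_def,
    map_smul, ← algebraMap_smul S, smul_mem_iff_of_isUnit _ (IsLocalization.map_units S t)]

end Localization

lemma noZeroSMulDivisors_quotient_iff {R M : Type*} [Ring R] [AddCommGroup M] [Module R M]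
    (P : Submodule R M) :
    NoZeroSMulDivisors R (M ⧸ P) ↔ ∀ r : R, r ≠ 0 → ∀ x, r • x ∈ P → x ∈ P := by
  simp only [noZeroSMulDivisors_iff_right_eq_zero_of_smul, (Quotient.mk_surjective P).forall,
    ← Quotient.mk_smul, Quotient.mk_eq_zero]

section FractionField

variable {R M N : Type*} (K : Type*) [CommRing R] [IsDomain R] [Field K] [Algebra R K]
  [IsFractionRing R K] [AddCommGroup M] [Module R M] [AddCommGroup N] [Module R N] [Module K N]
  [IsScalarTower R K N] (f : M →ₗ[R] N) [IsLocalizedModule R⁰ f]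

noncomputable def pureOrderIso :
    {P : Submodule R M // NoZeroSMulDivisors R (M ⧸ P)} ≃o Submodule K N :=
  (localized'gi K R⁰ f).orderIsoOfClosed _
    (fun P hP => comap_localized'_of_smul_mem K R⁰ f fun t x =>
      (noZeroSMulDivisors_quotient_iff P).mp hP t (nonZeroDivisors.coe_ne_zero t) x)
    (fun W => (noZeroSMulDivisors_quotient_iff _).mpr fun r hr _ =>
      (smul_mem_comap_restrictScalars_iff K R⁰ f W ⟨r, mem_nonZeroDivisors_of_ne_zero hr⟩).mp)

lemma pureOrderIso_apply (P : {P : Submodule R M // NoZeroSMulDivisors R (M ⧸ P)}) :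
    pureOrderIso K f P = span K (f '' P) :=
  localized'_eq_span K R⁰ f P

end FractionField

end Submodule

theorem commaQ_iso_JV [NoZeroSMulDivisors A d] :
    ∃ e : CommaQ A d ≃o JV (FractionRing A) ((FractionRing A) ⊗[A] d),
      ∀ p : CommaQ A d,
        ofDual (e p).val.1 =
          Submodule.span (FractionRing A)
            ((TensorProduct.mk A (FractionRing A) d 1) '' ((ofDual p.val.1 : Submodule A d) : Set d)) ∧
        (e p).val.2 =
          Submodule.span (FractionRing A)
            ((TensorProduct.mk A (FractionRing A) d 1) '' ((p.val.2 : Submodule A d) : Set d)) := by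
  have bot_pure : NoZeroSMulDivisors A (d ⧸ (⊥ : Submodule A d)) :=
    (Submodule.noZeroSMulDivisors_quotient_iff ⊥).mpr fun r hr x hx =>
      (smul_eq_zero.mp ((Submodule.mem_bot A).mp hx)).resolve_left hr
  have top_pure : NoZeroSMulDivisors A (d ⧸ (⊤ : Submodule A d)) :=
    (Submodule.noZeroSMulDivisors_quotient_iff ⊤).mpr fun _ _ _ _ => Submodule.mem_top
  let e := Submodule.pureOrderIso (FractionRing A) (TensorProduct.mk A (FractionRing A) d 1)
  exact ⟨e.properLayers bot_pure top_pure, fun p =>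
    ⟨Submodule.pureOrderIso_apply _ _ _, Submodule.pureOrderIso_apply _ _ _⟩⟩
end
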